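/- If a Boolean algebra A contains a subalgebra isomorphic to the Cantor algebra, then there exist Boolean homomorphisms φ_n : A → M (n ∈ ω) and φ : A → M such that (φ_n) converges pointwise to φ but does not converge uniformly. -/

import Mathlib

open MeasureTheory Set Filter Topology
open scoped symmDiff ENNReal

noncomputable section

universe u v

/-- The two-element set `{0,1}`, as an additive group (addition mod 2) with the
discrete topology. -/
inductive Two : Type
  | zero
  | one
  deriving DecidableEq

instance : Fintype Two := ⟨{Two.zero, Two.one}, fun x => by cases x <;> decide⟩

instance : Zero Two := ⟨Two.zero⟩
instance : One Two := ⟨Two.one⟩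

/-- Addition modulo 2 on `{0,1}`. -/
def Two.add : Two → Two → Two
  | Two.zero, x => x
  | Two.one, Two.zero => Two.one
  | Two.one, Two.one => Two.zero

instance : Add Two := ⟨Two.add⟩
instance : Neg Two := ⟨fun x => x⟩

instance : AddCommGroup Two where
  add := (· + ·)
  zero := Two.zero
  neg := (- ·)
  add_assoc := by decide
  zero_add := by decide
  add_zero := by decide
  neg_add_cancel := by decide
  add_comm := by decide
  nsmul := nsmulRec
  zsmul := zsmulRec

instance : TopologicalSpace Two := ⊥
instance : DiscreteTopology Two := ⟨rfl⟩

instance : IsTopologicalAddGroup Two where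
  continuous_add := continuous_of_discreteTopology
  continuous_neg := continuous_of_discreteTopology

/-- The Cantor cube `{0,1}^κ`, with the product topology. -/
abbrev Cube (κ : Type u) : Type u := κ → Two

instance (κ : Type u) : MeasurableSpace (Cube κ) := borel _

instance (κ : Type u) : BorelSpace (Cube κ) := ⟨rfl⟩

/-- The fair-coin product measure `λ_κ` on `{0,1}^κ`: the Haar measure of the compact
group `{0,1}^κ`, normalized so that the whole space has measure `1`. -/
def lam (κ : Type u) : Measure (Cube κ) :=
  Measure.addHaarMeasure ⟨⟨Set.univ, isCompact_univ⟩, by simpa using Set.univ_nonempty⟩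

/-- The Boolean algebra of measurable subsets of `X`. -/
abbrev MSet (X : Type u) [MeasurableSpace X] : Type u := {s : Set X // MeasurableSet s}

/-- The ideal of `μ`-null sets in the Boolean ring of measurable subsets of `X`. -/
def nullIdeal {X : Type u} [MeasurableSpace X] (μ : Measure X) :
    Ideal (AsBoolRing (MSet X)) where
  carrier := {s | μ (ofBoolRing s : MSet X).1 = 0}
  zero_mem' := by
    show μ (ofBoolRing (0 : AsBoolRing (MSet X)) : MSet X).1 = 0
    rw [ofBoolRing_zero]
    simpa using measure_empty (μ := μ)
  add_mem' := by
    intro a b ha hb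
    show μ (ofBoolRing (a + b) : MSet X).1 = 0
    rw [ofBoolRing_add]
    refine le_antisymm ?_ zero_le
    calc μ ((ofBoolRing a ∆ ofBoolRing b : MSet X) : Set X)
        ≤ μ (((ofBoolRing a : MSet X) : Set X) ∪ ((ofBoolRing b : MSet X) : Set X)) := by
          refine measure_mono ?_
          simp only [symmDiff_def, MeasurableSet.sup_eq_union, MeasurableSet.coe_union,
            MeasurableSet.coe_sdiff]
          exact Set.union_subset_union Set.diff_subset Set.diff_subset
      _ ≤ μ ((ofBoolRing a : MSet X) : Set X) + μ ((ofBoolRing b : MSet X) : Set X) :=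
          measure_union_le _ _
      _ = 0 := by rw [ha, hb, add_zero]
  smul_mem' := by
    intro c x hx
    show μ (ofBoolRing (c * x) : MSet X).1 = 0
    rw [ofBoolRing_mul]
    refine le_antisymm ?_ zero_le
    calc μ ((ofBoolRing c ⊓ ofBoolRing x : MSet X) : Set X)
        ≤ μ ((ofBoolRing x : MSet X) : Set X) := by
          refine measure_mono ?_
          simp only [MeasurableSet.inf_eq_inter, MeasurableSet.coe_inter]
          exact Set.inter_subset_right
      _ = 0 := hx

instance {X : Type u} [MeasurableSpace X] (μ : Measure X) :
    BooleanRing (AsBoolRing (MSet X) ⧸ nullIdeal μ) where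
  isIdempotentElem a := by
    show _ * _ = _
    obtain ⟨x, rfl⟩ := Ideal.Quotient.mk_surjective a
    rw [← map_mul]
    exact congrArg _ (BooleanRing.mul_self x)

/-- The measure algebra of the measure `μ`: measurable sets modulo `μ`-null sets,
as a Boolean algebra.  For `μ = lam κ` this is the measure algebra `M_κ`. -/
abbrev MAlg (X : Type u) [MeasurableSpace X] (μ : Measure X) : Type u :=
  AsBoolAlg (AsBoolRing (MSet X) ⧸ nullIdeal μ)

/-- The class of a measurable set in the measure algebra. -/
def MAlg.mk {X : Type u} [MeasurableSpace X] (μ : Measure X) (s : MSet X) : MAlg X μ :=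
  toBoolAlg (Ideal.Quotient.mk (nullIdeal μ) (toBoolRing s))

/-- The measure induced by `μ` on its measure algebra `MAlg X μ` (with real values). -/
def mval {X : Type u} [MeasurableSpace X] (μ : Measure X) (a : MAlg X μ) : ℝ :=
  Quotient.liftOn' (ofBoolAlg a) (fun s => (μ (ofBoolRing s : MSet X).1).toReal)
    (by
      intro s t h
      have hst : s - t ∈ nullIdeal μ := by
        rwa [Submodule.quotientRel_def] at h
      have h0 : μ (((ofBoolRing s : MSet X) : Set X) ∆ ((ofBoolRing t : MSet X) : Set X)) = 0 := by
        have hn : μ ((ofBoolRing (s - t) : MSet X) : Set X) = 0 := hst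
        rw [ofBoolRing_sub] at hn
        simpa only [symmDiff_def, MeasurableSet.sup_eq_union, MeasurableSet.coe_union,
          MeasurableSet.coe_sdiff, Set.sup_eq_union] using hn
      have hc := measure_congr (μ := μ) (MeasureTheory.measure_symmDiff_eq_zero_iff.mp h0)
      simp only [hc])

/-!
The canonical embedding of the Cantor algebra into `M` extends, by Sikorski's extension theorem
(`M` is a complete Boolean algebra), to a homomorphism `φ : A → M`. Let `σₙ` be the automorphism
of `M` induced by flipping the `n`-th coordinate of `2^ω` and put `φₙ = σₙ ∘ φ`. A clopen set
depends on finitely many coordinates, so it is fixed by `σₙ` for large `n`; since clopen sets are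
dense in `M`, `σₙ → id` pointwise. But `σₙ` sends the clopen set `{x | xₙ = 1}` to its complement,
at distance `1`, so the convergence is not uniform.
-/

namespace BooleanSubalgebra

variable {α : Type*} [BooleanAlgebra α]

theorem mem_sSup_of_directedOn {S : Set (BooleanSubalgebra α)} (hne : S.Nonempty)
    (hS : DirectedOn (· ≤ ·) S) {x : α} : x ∈ sSup S ↔ ∃ L ∈ S, x ∈ L := by
  refine ⟨fun hx => ?_, fun ⟨L, hL, hx⟩ => le_sSup hL hx⟩
  let U : BooleanSubalgebra α :=
    { carrier := ⋃ L ∈ S, L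
      supClosed' := by
        simp only [SupClosed, mem_iUnion₂]
        rintro x ⟨L, hL, hx⟩ y ⟨M, hM, hy⟩
        obtain ⟨N, hN, hLN, hMN⟩ := hS L hL M hM
        exact ⟨N, hN, sup_mem (hLN hx) (hMN hy)⟩
      infClosed' := by
        simp only [InfClosed, mem_iUnion₂]
        rintro x ⟨L, hL, hx⟩ y ⟨M, hM, hy⟩
        obtain ⟨N, hN, hLN, hMN⟩ := hS L hL M hM
        exact ⟨N, hN, inf_mem (hLN hx) (hMN hy)⟩
      bot_mem' := mem_biUnion hne.some_mem bot_mem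
      compl_mem' := by
        simp only [mem_iUnion₂]
        rintro x ⟨L, hL, hx⟩
        exact ⟨L, hL, compl_mem hx⟩ }
  have hSU : sSup S ≤ U := sSup_le fun L hL x hx => mem_biUnion hL hx
  simpa [U] using hSU hx

def agreeBelow (L : BooleanSubalgebra α) (d : α) : BooleanSubalgebra α where
  carrier := {x | ∃ p ∈ L, x ⊓ d = p ⊓ d}
  supClosed' := by
    rintro x ⟨p, hp, hxp⟩ y ⟨q, hq, hyq⟩
    exact ⟨p ⊔ q, sup_mem hp hq, by rw [inf_sup_right, inf_sup_right, hxp, hyq]⟩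
  infClosed' := by
    rintro x ⟨p, hp, hxp⟩ y ⟨q, hq, hyq⟩
    exact ⟨p ⊓ q, inf_mem hp hq, by rw [inf_inf_distrib_right, hxp, hyq, ← inf_inf_distrib_right]⟩
  bot_mem' := ⟨⊥, bot_mem, rfl⟩
  compl_mem' := by
    rintro x ⟨p, hp, hxp⟩
    have h (y : α) : yᶜ ⊓ d = d \ (y ⊓ d) := by
      rw [sdiff_inf_self_right, _root_.sdiff_eq, inf_comm]
    exact ⟨pᶜ, compl_mem hp, by rw [h, hxp, ← h]⟩

lemma mem_agreeBelow {L : BooleanSubalgebra α} {d x : α} :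
    x ∈ L.agreeBelow d ↔ ∃ p ∈ L, x ⊓ d = p ⊓ d :=
  Iff.rfl

lemma le_agreeBelow (L : BooleanSubalgebra α) (d : α) : L ≤ L.agreeBelow d :=
  fun x hx => ⟨x, hx, rfl⟩

/-- The Boolean subalgebra generated by `L` and `c`: its elements are the `p ⊓ c ⊔ q ⊓ cᶜ`
with `p q ∈ L`. -/
def adjoin (L : BooleanSubalgebra α) (c : α) : BooleanSubalgebra α :=
  L.agreeBelow c ⊓ L.agreeBelow cᶜ

lemma le_adjoin (L : BooleanSubalgebra α) (c : α) : L ≤ L.adjoin c :=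
  le_inf (L.le_agreeBelow c) (L.le_agreeBelow cᶜ)

lemma mem_adjoin_self (L : BooleanSubalgebra α) (c : α) : c ∈ L.adjoin c :=
  ⟨⟨⊤, top_mem, by simp⟩, ⟨⊥, bot_mem, by simp⟩⟩

variable {A B : Type*} [BooleanAlgebra A] [BooleanAlgebra B]

/-- Partial homomorphisms `A ⇀ B` are encoded by their graphs, Boolean subalgebras of `A × B`. -/
def IsGraph (G : BooleanSubalgebra (A × B)) : Prop :=
  ∀ ⦃p⦄, p ∈ G → ∀ ⦃q⦄, q ∈ G → p.1 = q.1 → p.2 = q.2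

namespace IsGraph

variable {G : BooleanSubalgebra (A × B)}

lemma of_bot (h : ∀ b, ((⊥ : A), b) ∈ G → b = ⊥) : IsGraph G := by
  have hle : ∀ ⦃p⦄, p ∈ G → ∀ ⦃q⦄, q ∈ G → p.1 = q.1 → p.2 ≤ q.2 := by
    intro p hp q hq hpq
    rw [← sdiff_eq_bot_iff]
    apply h
    convert sdiff_mem hp hq using 1
    exact Prod.ext (by simp [hpq]) rfl
  exact fun p hp q hq hpq => le_antisymm (hle hp hq hpq) (hle hq hp hpq.symm)

lemma mono (hG : IsGraph G) {x y : A} {u v : B} (hxu : (x, u) ∈ G) (hyv : (y, v) ∈ G)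
    (hxy : x ≤ y) : u ≤ v :=
  sup_eq_right.1 (hG (sup_mem hxu hyv) hyv (sup_eq_right.2 hxy))

/-- Sikorski's extension step: `a` may be sent to any `m` lying above the images of the elements
below `a` and below the images of the elements above `a`. -/
lemma adjoin {a : A} {m : B}
    (hlow : ∀ x u, (x, u) ∈ G → x ≤ a → u ≤ m) (hup : ∀ x u, (x, u) ∈ G → a ≤ x → m ≤ u) :
    IsGraph (G.adjoin (a, m)) := by
  refine of_bot fun b ⟨hpos, hneg⟩ => ?_
  obtain ⟨⟨x, u⟩, hxu, hxub⟩ := mem_agreeBelow.1 hpos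
  obtain ⟨⟨y, v⟩, hyv, hyvb⟩ := mem_agreeBelow.1 hneg
  have hxa : ⊥ ⊓ a = x ⊓ a := congrArg Prod.fst hxub
  have hbu : b ⊓ m = u ⊓ m := congrArg Prod.snd hxub
  have hya : ⊥ ⊓ aᶜ = y ⊓ aᶜ := congrArg Prod.fst hyvb
  have hbv : b ⊓ mᶜ = v ⊓ mᶜ := congrArg Prod.snd hyvb
  have hum : u ⊓ m = ⊥ := by
    have hax : a ≤ xᶜ := le_compl_iff_disjoint_left.2 (disjoint_iff.2 (by simpa using hxa.symm))
    exact disjoint_iff.1 (le_compl_iff_disjoint_left.1 (hup _ _ (compl_mem hxu) hax))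
  have hvm : v ⊓ mᶜ = ⊥ := by
    have hya' : y ≤ a := sdiff_eq_bot_iff.1 (by rw [_root_.sdiff_eq, ← hya, bot_inf_eq])
    rw [← _root_.sdiff_eq, sdiff_eq_bot_iff]
    exact hlow _ _ hyv hya'
  rw [← sup_inf_inf_compl (x := b) (y := m), hbu, hbv, hum, hvm, sup_bot_eq]

end IsGraph

theorem exists_isGraph_forall_exists_mem (hB : ∀ s : Set B, ∃ m, IsLUB s m)
    {G₀ : BooleanSubalgebra (A × B)} (h₀ : IsGraph G₀) :
    ∃ G, G₀ ≤ G ∧ IsGraph G ∧ ∀ a, ∃ b, (a, b) ∈ G := by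
  have hchain : ∀ c ⊆ {G | G₀ ≤ G ∧ IsGraph G}, IsChain (· ≤ ·) c →
      ∀ L ∈ c, ∃ ub ∈ {G | G₀ ≤ G ∧ IsGraph G}, ∀ M ∈ c, M ≤ ub := by
    intro c hcs hc L hL
    refine ⟨sSup c, ⟨(hcs hL).1.trans (le_sSup hL), fun p hp q hq => ?_⟩, fun _ => le_sSup⟩
    rw [mem_sSup_of_directedOn ⟨L, hL⟩ hc.directedOn] at hp hq
    obtain ⟨M, hM, hpM⟩ := hp
    obtain ⟨N, hN, hqN⟩ := hq
    rcases hc.total hM hN with hMN | hNM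
    · exact (hcs hN).2 (hMN hpM) hqN
    · exact (hcs hM).2 hpM (hNM hqN)
  obtain ⟨G, hG₀G, hmax⟩ := zorn_le_nonempty₀ _ hchain G₀ ⟨le_rfl, h₀⟩
  obtain ⟨-, hG⟩ := hmax.prop
  refine ⟨G, hG₀G, hG, fun a => ?_⟩
  obtain ⟨m, hm⟩ := hB {v | ∃ x, (x, v) ∈ G ∧ x ≤ a}
  have hext : IsGraph (G.adjoin (a, m)) := IsGraph.adjoin
    (fun x u hxu hxa => hm.1 ⟨x, hxu, hxa⟩)
    (fun x u hxu hax => hm.2 fun v ⟨y, hyv, hya⟩ => hG.mono hyv hxu (hya.trans hax))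
  exact ⟨m, hmax.2 ⟨hG₀G.trans (le_adjoin _ _), hext⟩ (le_adjoin _ _) (mem_adjoin_self _ _)⟩

end BooleanSubalgebra

/-- Sikorski's extension theorem. -/
theorem BoundedLatticeHom.exists_comp_eq_of_injective {A B C : Type*} [BooleanAlgebra A]
    [BooleanAlgebra B] [BooleanAlgebra C] (hB : ∀ s : Set B, ∃ m, IsLUB s m)
    (e : BoundedLatticeHom C A) (he : Function.Injective e) (f : BoundedLatticeHom C B) :
    ∃ φ : BoundedLatticeHom A B, φ.comp e = f := by
  let G₀ : BooleanSubalgebra (A × B) :=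
    { carrier := range fun c => (e c, f c)
      supClosed' := by
        rintro _ ⟨c, rfl⟩ _ ⟨d, rfl⟩
        exact ⟨c ⊔ d, by simp⟩
      infClosed' := by
        rintro _ ⟨c, rfl⟩ _ ⟨d, rfl⟩
        exact ⟨c ⊓ d, by simp⟩
      bot_mem' := ⟨⊥, Prod.ext (map_bot e) (map_bot f)⟩
      compl_mem' := by
        rintro _ ⟨c, rfl⟩
        exact ⟨cᶜ, Prod.ext (map_compl' e c) (map_compl' f c)⟩ }
  have h₀ : G₀.IsGraph := by
    rintro _ ⟨c, rfl⟩ _ ⟨d, rfl⟩ hcd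
    exact congrArg f (he hcd)
  obtain ⟨G, hG₀G, hG, htot⟩ := BooleanSubalgebra.exists_isGraph_forall_exists_mem hB h₀
  choose φ hφ using htot
  refine ⟨{ toFun := φ
            map_sup' := fun a b => hG (hφ _) (BooleanSubalgebra.sup_mem (hφ a) (hφ b)) rfl
            map_inf' := fun a b => hG (hφ _) (BooleanSubalgebra.inf_mem (hφ a) (hφ b)) rfl
            map_top' := hG (hφ _) BooleanSubalgebra.top_mem rfl
            map_bot' := hG (hφ _) BooleanSubalgebra.bot_mem rfl }, ?_⟩
  ext c
  exact hG (hφ (e c)) (hG₀G ⟨c, rfl⟩) rfl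

lemma MeasureTheory.Measure.exists_countable_measure_sUnion_maximal {X : Type*}
    [MeasurableSpace X] (μ : Measure X) (R : Set (Set X)) :
    ∃ T ⊆ R, T.Countable ∧ ∀ T' ⊆ R, T'.Countable → μ (⋃₀ T') ≤ μ (⋃₀ T) := by
  set V := {v | ∃ T ⊆ R, T.Countable ∧ μ (⋃₀ T) = v}
  obtain ⟨v, -, hv_lim, hvV⟩ :=
    exists_seq_tendsto_sSup (S := V) ⟨0, ∅, empty_subset R, countable_empty, by simp⟩
      (OrderTop.bddAbove V)
  choose T hTR hTc hTv using hvV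
  refine ⟨⋃ n, T n, iUnion_subset hTR, countable_iUnion hTc, fun T' hT'R hT'c => ?_⟩
  calc μ (⋃₀ T') ≤ sSup V := le_sSup ⟨T', hT'R, hT'c, rfl⟩
    _ ≤ μ (⋃₀ ⋃ n, T n) := le_of_tendsto' hv_lim fun n =>
      hTv n ▸ measure_mono (sUnion_mono (subset_iUnion T n))

def MSet.comap {X Y : Type*} [MeasurableSpace X] [MeasurableSpace Y] (f : X → Y)
    (hf : Measurable f) : BoundedLatticeHom (MSet Y) (MSet X) where
  toFun s := ⟨f ⁻¹' s, hf s.2⟩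
  map_sup' _ _ := rfl
  map_inf' _ _ := rfl
  map_top' := rfl
  map_bot' := rfl

namespace MAlg

variable {X : Type*} [MeasurableSpace X] (μ : Measure X)

def mkHom : BoundedLatticeHom (MSet X) (MAlg X μ) :=
  (Ideal.Quotient.mk (nullIdeal μ)).asBoolAlg.comp (OrderIso.asBoolAlgAsBoolRing (MSet X)).symm

@[simp] lemma mkHom_apply (s : MSet X) : mkHom μ s = MAlg.mk μ s := rfl

lemma mk_surjective : Function.Surjective (MAlg.mk μ) := by
  intro x
  obtain ⟨r, hr⟩ := Ideal.Quotient.mk_surjective (ofBoolAlg x)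
  exact ⟨ofBoolRing r, congrArg toBoolAlg hr⟩

lemma mval_mk (s : MSet X) : mval μ (MAlg.mk μ s) = (μ s).toReal := rfl

lemma mval_mk_symmDiff (s t : MSet X) :
    mval μ (MAlg.mk μ s ∆ MAlg.mk μ t) = (μ ((s : Set X) ∆ t)).toReal := by
  rw [← mkHom_apply, ← mkHom_apply, ← map_symmDiff', mkHom_apply, mval_mk]
  simp [symmDiff_def]

lemma mk_eq_mk_iff {s t : MSet X} :
    MAlg.mk μ s = MAlg.mk μ t ↔ μ ((s : Set X) ∆ t) = 0 := by
  rw [MAlg.mk, MAlg.mk, toBoolAlg_inj, Ideal.Quotient.eq]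
  show μ (ofBoolRing (toBoolRing s - toBoolRing t) : MSet X) = 0 ↔ _
  rw [ofBoolRing_sub, ofBoolRing_toBoolRing, ofBoolRing_toBoolRing]
  simp [symmDiff_def]

lemma mk_le_mk_iff {s t : MSet X} : MAlg.mk μ s ≤ MAlg.mk μ t ↔ μ ((s : Set X) \ t) = 0 := by
  rw [← sdiff_eq_bot_iff, ← mkHom_apply, ← mkHom_apply, ← map_sdiff', ← map_bot (mkHom μ),
    mkHom_apply, mkHom_apply, mk_eq_mk_iff]
  simp

/-- The supremum is the class of a countable union of representatives of maximal measure. -/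
theorem exists_isLUB [IsFiniteMeasure μ] (S : Set (MAlg X μ)) : ∃ m, IsLUB S m := by
  obtain ⟨T, hTS, hTc, hTmax⟩ := μ.exists_countable_measure_sUnion_maximal
    {s | ∃ hs : MeasurableSet s, MAlg.mk μ ⟨s, hs⟩ ∈ S}
  have hTm : MeasurableSet (⋃₀ T) := .sUnion hTc fun s hs => (hTS hs).1
  refine ⟨MAlg.mk μ ⟨⋃₀ T, hTm⟩, fun c hc => ?_, fun u hu => ?_⟩
  · obtain ⟨s, rfl⟩ := mk_surjective μ c
    have hmax := hTmax (insert (s : Set X) T) (insert_subset ⟨s.2, hc⟩ hTS) (hTc.insert _)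
    rw [sUnion_insert, ← sdiff_union_self, measure_union disjoint_sdiff_left hTm] at hmax
    rw [mk_le_mk_iff]
    exact nonpos_iff_eq_zero.1 <| ENNReal.le_of_add_le_add_right (measure_ne_top μ _)
      (by simpa using hmax)
  · obtain ⟨w, rfl⟩ := mk_surjective μ u
    rw [mk_le_mk_iff]
    have hsub : ⋃₀ T \ w ⊆ ⋃ s ∈ T, s \ w := by
      rintro x ⟨⟨s, hs, hxs⟩, hxw⟩
      exact mem_biUnion hs ⟨hxs, hxw⟩
    refine measure_mono_null hsub ((measure_biUnion_null_iff hTc).2 fun s hs => ?_)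
    exact (mk_le_mk_iff μ).1 (hu (hTS hs).2)

def comap {Y : Type*} [MeasurableSpace Y] {ν : Measure Y} (f : X → Y)
    (hf : Measure.QuasiMeasurePreserving f μ ν) : BoundedLatticeHom (MAlg Y ν) (MAlg X μ) :=
  (Ideal.Quotient.lift (nullIdeal ν)
    ((Ideal.Quotient.mk (nullIdeal μ)).comp (MSet.comap f hf.measurable).asBoolRing)
    fun _ hs => Ideal.Quotient.eq_zero_iff_mem.2 (hf.preimage_null hs)).asBoolAlg

lemma comap_mk {Y : Type*} [MeasurableSpace Y] {ν : Measure Y} (f : X → Y)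
    (hf : Measure.QuasiMeasurePreserving f μ ν) (s : MSet Y) :
    comap μ f hf (MAlg.mk ν s) = MAlg.mk μ (MSet.comap f hf.measurable s) :=
  rfl

end MAlg

theorem IsCompact.eventually_mapsTo {X ι : Type*} [TopologicalSpace X] {l : Filter ι}
    {F : ι → X → X} {K U : Set X} (hK : IsCompact K) (hU : IsOpen U) (hKU : K ⊆ U)
    (hF : ∀ x ∈ K, Tendsto (Function.uncurry F) (l ×ˢ 𝓝 x) (𝓝 x)) :
    ∀ᶠ i in l, MapsTo (F i) K U := by
  have h : ∀ᶠ p in l ×ˢ 𝓝ˢ K, F p.1 p.2 ∈ U :=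
    hK.mem_prod_nhdsSet_of_forall fun x hx => hF x hx (hU.mem_nhds (hKU hx))
  exact h.curry.mono fun _ hi => hi.self_of_nhdsSet

theorem IsClopen.eventually_preimage_eq {X ι : Type*} [TopologicalSpace X] [CompactSpace X]
    {l : Filter ι} {F : ι → X → X} {C : Set X} (hC : IsClopen C)
    (hF : ∀ x, Tendsto (Function.uncurry F) (l ×ˢ 𝓝 x) (𝓝 x)) :
    ∀ᶠ i in l, F i ⁻¹' C = C := by
  filter_upwards [hC.isClosed.isCompact.eventually_mapsTo hC.isOpen subset_rfl fun x _ => hF x,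
    hC.compl.isClosed.isCompact.eventually_mapsTo hC.compl.isOpen subset_rfl fun x _ => hF x]
    with i hin hout
  ext x
  by_cases hx : x ∈ C
  · simpa [hx] using hin hx
  · simpa [hx] using hout hx

theorem exists_isClopen_measure_symmDiff_lt {X : Type*} [TopologicalSpace X] [MeasurableSpace X]
    [BorelSpace X] [CompactSpace X] [T2Space X] [TotallyDisconnectedSpace X]
    [SecondCountableTopology X] (μ : Measure X) [IsFiniteMeasure μ] {s : Set X}
    (hs : MeasurableSet s) {ε : ℝ≥0∞} (hε : 0 < ε) : ∃ C, IsClopen C ∧ μ (C ∆ s) < ε :=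
  exists_measure_symmDiff_lt_of_generateFrom_isSetRing (C := {s : Set X | IsClopen s})
    ⟨isClopen_empty, fun _ _ => IsClopen.union, fun _ _ => IsClopen.diff⟩
    ⟨{univ}, countable_singleton _, by simp [isClopen_univ], by simp⟩
    ((BorelSpace.measurable_eq (α := X)).trans
      (borel_eq_generateFrom_of_subbasis isTopologicalBasis_isClopen.eq_generateFrom)) hs hε

def TopologicalSpace.Clopens.toMSet {X : Type*} [TopologicalSpace X] [MeasurableSpace X]
    [OpensMeasurableSpace X] : BoundedLatticeHom (TopologicalSpace.Clopens X) (MSet X) where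
  toFun U := ⟨U, U.isClopen.isOpen.measurableSet⟩
  map_sup' _ _ := rfl
  map_inf' _ _ := rfl
  map_top' := rfl
  map_bot' := rfl

instance (κ : Type*) : (lam κ).IsAddLeftInvariant := Measure.isAddLeftInvariant_addHaarMeasure _

instance (κ : Type*) : IsProbabilityMeasure (lam κ) := ⟨Measure.addHaarMeasure_self⟩

namespace Cube

variable {κ : Type*} [DecidableEq κ]

def flipAt (i : κ) (x : Cube κ) : Cube κ := Pi.single i 1 + x

lemma measurePreserving_flipAt (i : κ) : MeasurePreserving (flipAt i) (lam κ) (lam κ) :=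
  measurePreserving_add_left _ _

lemma tendsto_flipAt (x : Cube κ) :
    Tendsto (Function.uncurry flipAt) (cofinite ×ˢ 𝓝 x) (𝓝 x) := by
  refine tendsto_pi_nhds.2 fun i => ?_
  have hi : ∀ᶠ p : κ × Cube κ in cofinite ×ˢ 𝓝 x, Function.uncurry flipAt p i = p.2 i :=
    (eventually_cofinite_ne i).prod_inl _ |>.mono fun p hp => by
      simp [flipAt, Function.uncurry, Pi.single_eq_of_ne' hp]
  exact (tendsto_congr' hi).2 (((continuous_apply i).tendsto x).comp tendsto_snd)

theorem tendsto_measure_preimage_flipAt_symmDiff [Countable κ] {s : Set (Cube κ)}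
    (hs : MeasurableSet s) :
    Tendsto (fun i => lam κ ((flipAt i ⁻¹' s) ∆ s)) cofinite (𝓝 0) := by
  refine ENNReal.tendsto_nhds_zero.2 fun ε hε => ?_
  obtain ⟨C, hC, hCs⟩ := exists_isClopen_measure_symmDiff_lt (lam κ) hs
    (ENNReal.half_pos hε.ne')
  filter_upwards [hC.eventually_preimage_eq tendsto_flipAt] with i hi
  calc lam κ ((flipAt i ⁻¹' s) ∆ s)
      ≤ lam κ ((flipAt i ⁻¹' s) ∆ (flipAt i ⁻¹' C)) + lam κ ((flipAt i ⁻¹' C) ∆ s) :=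
        measure_symmDiff_le _ _ _
    _ = lam κ (C ∆ s) + lam κ (C ∆ s) := by
      rw [← preimage_symmDiff, (measurePreserving_flipAt i).measure_preimage
        (hs.symmDiff hC.isOpen.measurableSet).nullMeasurableSet, symmDiff_comm, hi]
    _ ≤ ε := by rw [← ENNReal.add_halves ε]; exact add_le_add hCs.le hCs.le

lemma preimage_flipAt_symmDiff_eq_univ (i : κ) :
    (flipAt i ⁻¹' {x | x i = 1}) ∆ {x | x i = 1} = univ := by
  ext x
  simp only [flipAt, mem_symmDiff, mem_preimage, mem_ofPred_eq, Pi.add_apply, Pi.single_eq_same,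
    mem_univ, iff_true]
  cases x i <;> decide

def flipHom (i : κ) : BoundedLatticeHom (MAlg (Cube κ) (lam κ)) (MAlg (Cube κ) (lam κ)) :=
  MAlg.comap (lam κ) (flipAt i) (measurePreserving_flipAt i).quasiMeasurePreserving

lemma mval_flipHom_mk_symmDiff (i : κ) (s : MSet (Cube κ)) :
    mval (lam κ) (flipHom i (MAlg.mk (lam κ) s) ∆ MAlg.mk (lam κ) s)
      = (lam κ ((flipAt i ⁻¹' s) ∆ s)).toReal :=
  MAlg.mval_mk_symmDiff _ _ _

theorem tendsto_mval_flipHom_symmDiff [Countable κ] (x : MAlg (Cube κ) (lam κ)) :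
    Tendsto (fun i => mval (lam κ) (flipHom i x ∆ x)) cofinite (𝓝 0) := by
  obtain ⟨s, rfl⟩ := MAlg.mk_surjective (lam κ) x
  simp only [mval_flipHom_mk_symmDiff]
  have h := (ENNReal.tendsto_toReal ENNReal.zero_ne_top).comp
    (tendsto_measure_preimage_flipAt_symmDiff s.2)
  rwa [ENNReal.toReal_zero] at h

end Cube

/-- If a Boolean algebra contains a copy of the Cantor algebra (the clopen algebra of
`2^ω`), then there is a sequence of Boolean homomorphisms into the measure algebra `M`
converging pointwise but not uniformly. -/
theorem nontrivial_convergence_of_homomorphisms_of_algebra_containing_cantor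
    {A : Type u} [BooleanAlgebra A]
    (e : BoundedLatticeHom (TopologicalSpace.Clopens (Cube ℕ)) A)
    (he : Function.Injective e) :
    ∃ (φn : ℕ → BoundedLatticeHom A (MAlg (Cube ℕ) (lam ℕ)))
      (φ : BoundedLatticeHom A (MAlg (Cube ℕ) (lam ℕ))),
      (∀ a : A, Filter.Tendsto (fun n : ℕ => mval (lam ℕ) (φn n a ∆ φ a))
        Filter.atTop (nhds (0 : ℝ))) ∧
      ¬ (∀ ε : ℝ, 0 < ε → ∃ N : ℕ, ∀ n > N, ∀ a : A,
          mval (lam ℕ) (φn n a ∆ φ a) < ε) := by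
  obtain ⟨φ, hφ⟩ := BoundedLatticeHom.exists_comp_eq_of_injective (MAlg.exists_isLUB (lam ℕ)) e he
    ((MAlg.mkHom (lam ℕ)).comp TopologicalSpace.Clopens.toMSet)
  refine ⟨fun n => (Cube.flipHom n).comp φ, φ, fun a => ?_, fun h => ?_⟩
  · simpa [← Nat.cofinite_eq_atTop] using Cube.tendsto_mval_flipHom_symmDiff (φ a)
  · obtain ⟨N, hN⟩ := h 1 one_pos
    let U : TopologicalSpace.Clopens (Cube ℕ) :=
      ⟨{x | x (N + 1) = 1}, (isClopen_discrete {(1 : Two)}).preimage (continuous_apply _)⟩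
    have hdist : mval (lam ℕ) (Cube.flipHom (N + 1) (φ (e U)) ∆ φ (e U)) = 1 := by
      rw [← BoundedLatticeHom.comp_apply φ e, hφ, BoundedLatticeHom.comp_apply, MAlg.mkHom_apply,
        Cube.mval_flipHom_mk_symmDiff]
      exact (congrArg (fun t => (lam ℕ t).toReal) (Cube.preimage_flipAt_symmDiff_eq_univ _)).trans
        (by simp)
    exact (hN (N + 1) N.lt_succ_self (e U)).ne hdist
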